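/- arXiv:2107.13091 — 8 statements merged into one kernel-verified Lean document; each statement's English description precedes it below -/
import Mathlib

section
/- A positive integer N is a perfect square if and only if the Jacobi symbol (N/n) equals 1 for every odd prime n not dividing N. -/
private lemma isSquare_of_even_factorization' {N : ℕ} (hN : N ≠ 0)
    (h : ∀ p, Even (N.factorization p)) : IsSquare N := by
  refine ⟨N.factorization.prod fun p k => p ^ (k / 2), ?_⟩
  rw [← Finsupp.prod_mul]
  conv_lhs => rw [← Nat.factorization_prod_pow_eq_self hN]
  refine Finsupp.prod_congr fun p hp => ?_
  rw [← pow_add]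
  congr 1
  obtain ⟨c, hc⟩ := h p
  omega

private lemma exists_jacobi_neg_two (N : ℕ) (hN : 0 < N) (hq : Odd (N.factorization 2)) :
    ∃ b : ℕ, Odd b ∧ Nat.Coprime b (4 * N) ∧ jacobiSym (N : ℤ) b = -1 := by
  set e := N.factorization 2 with he
  set N' := N / 2 ^ e with hN'
  have hNe : 2 ^ e * N' = N := Nat.ordProj_mul_ordCompl_eq_self N 2
  have hN'2 : ¬ 2 ∣ N' := Nat.not_dvd_ordCompl Nat.prime_two hN.ne'
  have hN'odd : Odd N' := Nat.odd_iff.mpr (Nat.two_dvd_ne_zero.mp hN'2)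
  have hN'pos : 0 < N' := Nat.ordCompl_pos 2 hN.ne'
  have hco8 : Nat.Coprime 8 N' := Nat.Coprime.pow_left 3 ((Nat.prime_two.coprime_iff_not_dvd).mpr hN'2)
  obtain ⟨b, hb8, hbN'⟩ := Nat.chineseRemainder hco8 5 1
  have hbodd : Odd b := by
    have : b % 2 = 5 % 2 := hb8.of_dvd (by norm_num)
    rw [Nat.odd_iff]; omega
  have hb4 : b % 4 = 1 := by
    have : b % 4 = 5 % 4 := hb8.of_dvd (by norm_num)
    omega
  have hjb : jacobiSym (N : ℤ) b = -1 := by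
    have hcast : (N : ℤ) = 2 ^ e * (N' : ℤ) := by exact_mod_cast hNe.symm
    rw [hcast, jacobiSym.mul_left, jacobiSym.pow_left]
    have h2 : jacobiSym 2 b = -1 := by
      rw [jacobiSym.at_two hbodd]
      have : (b : ZMod 8) = 5 := by
        have := (ZMod.natCast_eq_natCast_iff b 5 8).mpr hb8
        simpa using this
      rw [this]; decide
    have hN'b : jacobiSym (N' : ℤ) b = 1 := by
      rw [jacobiSym.quadratic_reciprocity_one_mod_four' hN'odd hb4]
      have hm : (b : ℤ) % (N' : ℤ) = (1 : ℤ) % (N' : ℤ) := by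
        have := hbN'; unfold Nat.ModEq at this; exact_mod_cast this
      rw [jacobiSym.mod_left' hm, jacobiSym.one_left]
    rw [h2, hN'b, mul_one, Odd.neg_one_pow hq]
  have hcop : Nat.Coprime b (4 * N) := by
    have hb2 : Nat.Coprime b 2 := Nat.coprime_comm.mp
      ((Nat.prime_two.coprime_iff_not_dvd).mpr (Nat.two_dvd_ne_zero.mpr (Nat.odd_iff.mp hbodd)))
    have hbN' : Nat.Coprime b N' := hbN'.gcd_eq.trans (Nat.gcd_one_left N')
    have : 4 * N = 2 ^ (e + 2) * N' := by rw [← hNe]; ring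
    rw [this]
    exact Nat.Coprime.mul_right (hb2.pow_right _) hbN'
  exact ⟨b, hbodd, hcop, hjb⟩

private lemma exists_jacobi_neg_odd (N : ℕ) (hN : 0 < N) (q : ℕ) (hqp : q.Prime) (hq2 : q ≠ 2)
    (hq : Odd (N.factorization q)) :
    ∃ b : ℕ, Odd b ∧ Nat.Coprime b (4 * N) ∧ jacobiSym (N : ℤ) b = -1 := by
  haveI : Fact q.Prime := ⟨hqp⟩
  set e := N.factorization 2 with he
  set N' := N / 2 ^ e with hN'def
  have hNe : 2 ^ e * N' = N := Nat.ordProj_mul_ordCompl_eq_self N 2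
  have hN'2 : ¬ 2 ∣ N' := Nat.not_dvd_ordCompl Nat.prime_two hN.ne'
  have hN'odd : Odd N' := Nat.odd_iff.mpr (Nat.two_dvd_ne_zero.mp hN'2)
  have hN'pos : 0 < N' := Nat.ordCompl_pos 2 hN.ne'
  have hfq : N'.factorization q = N.factorization q := by
    rw [hN'def, Nat.factorization_ordCompl N 2, Finsupp.erase_ne hq2]
  set f := N'.factorization q with hf
  have hfodd : Odd f := hfq ▸ hq
  set m := N' / q ^ f with hmdef
  have hN'e : q ^ f * m = N' := Nat.ordProj_mul_ordCompl_eq_self N' q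
  have hqm : ¬ q ∣ m := Nat.not_dvd_ordCompl hqp hN'pos.ne'
  have hmpos : 0 < m := Nat.ordCompl_pos q hN'pos.ne'
  obtain ⟨u, hu⟩ := FiniteField.exists_nonsquare (F := ZMod q)
    (by rw [ZMod.ringChar_zmod_n]; exact hq2)
  have hu0 : u ≠ 0 := fun h => hu (h ▸ ⟨0, by simp⟩)
  have hcoq : Nat.Coprime (8 * m) q := by
    refine Nat.Coprime.mul ?_ ?_
    · exact Nat.coprime_comm.mp ((hqp.coprime_iff_not_dvd).mpr
        (fun h => hq2 ((Nat.prime_dvd_prime_iff_eq hqp Nat.prime_two).mp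
          (hqp.dvd_of_dvd_pow (n := 3) (by norm_num [h]))) ))
    · exact Nat.coprime_comm.mp ((hqp.coprime_iff_not_dvd).mpr hqm)
  obtain ⟨b, hb8m, hbq⟩ := Nat.chineseRemainder hcoq 1 u.val
  have hb8 : b ≡ 1 [MOD 8] := hb8m.of_dvd ⟨m, rfl⟩
  have hbm : b ≡ 1 [MOD m] := hb8m.of_dvd ⟨8, by ring⟩
  have hbodd : Odd b := by
    have : b % 2 = 1 % 2 := hb8.of_dvd (by norm_num)
    rw [Nat.odd_iff]; omega
  have hb4 : b % 4 = 1 := by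
    have : b % 4 = 1 % 4 := hb8.of_dvd (by norm_num)
    omega
  have hbzq : (b : ZMod q) = u := by
    have := (ZMod.natCast_eq_natCast_iff b u.val q).mpr hbq
    simpa [ZMod.natCast_val, ZMod.cast_id] using this
  have hjb : jacobiSym (N : ℤ) b = -1 := by
    have hcast : (N : ℤ) = 2 ^ e * (N' : ℤ) := by exact_mod_cast hNe.symm
    rw [hcast, jacobiSym.mul_left, jacobiSym.pow_left]
    have h2 : jacobiSym 2 b = 1 := by
      rw [jacobiSym.at_two hbodd]
      have : (b : ZMod 8) = 1 := by
        have := (ZMod.natCast_eq_natCast_iff b 1 8).mpr hb8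
        simpa using this
      rw [this]; decide
    have hN'b : jacobiSym (N' : ℤ) b = -1 := by
      rw [jacobiSym.quadratic_reciprocity_one_mod_four' hN'odd hb4]
      have hsplit : N' = q ^ f * m := hN'e.symm
      rw [hsplit, jacobiSym.mul_right' _ (pow_ne_zero f hqp.pos.ne') hmpos.ne',
        jacobiSym.pow_right]
      have hq1 : jacobiSym (b : ℤ) q = -1 := by
        rw [← jacobiSym.legendreSym.to_jacobiSym]
        exact (legendreSym.eq_neg_one_iff' q).mpr (hbzq ▸ hu)
      have hm1 : jacobiSym (b : ℤ) m = 1 := by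
        have hmm : (b : ℤ) % (m : ℤ) = (1 : ℤ) % (m : ℤ) := by
          have := hbm; unfold Nat.ModEq at this; exact_mod_cast this
        rw [jacobiSym.mod_left' hmm, jacobiSym.one_left]
      rw [hq1, hm1, mul_one, Odd.neg_one_pow hfodd]
    rw [h2, hN'b, one_pow, one_mul]
  have hcop : Nat.Coprime b (4 * N) := by
    have hb2 : Nat.Coprime b 2 := Nat.coprime_comm.mp
      ((Nat.prime_two.coprime_iff_not_dvd).mpr (Nat.two_dvd_ne_zero.mpr (Nat.odd_iff.mp hbodd)))
    have hbm' : Nat.Coprime b m := hbm.gcd_eq.trans (Nat.gcd_one_left m)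
    have hbq' : Nat.Coprime b q := by
      have h1 : Nat.gcd b q = Nat.gcd u.val q := hbq.gcd_eq
      have h2 : Nat.Coprime u.val q := by
        have := ZMod.val_coe_unit_coprime (hu0.isUnit.unit)
        rwa [hu0.isUnit.unit_spec] at this
      exact h1.trans h2
    have h4N : 4 * N = 2 ^ (e + 2) * (q ^ f * m) := by rw [hN'e, ← hNe]; ring
    rw [h4N]
    exact Nat.Coprime.mul_right (hb2.pow_right _)
      (Nat.Coprime.mul_right (hbq'.pow_right _) hbm')
  exact ⟨b, hbodd, hcop, hjb⟩

private lemma exists_prime_jacobi_neg_of (N : ℕ) (hN : 0 < N) {b : ℕ} (hb : Odd b)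
    (hco : Nat.Coprime b (4 * N)) (hj : jacobiSym (N : ℤ) b = -1) :
    ∃ p : ℕ, p.Prime ∧ Odd p ∧ ¬ p ∣ N ∧ jacobiSym (N : ℤ) p = -1 := by
  have h4N : 4 * N ≠ 0 := by positivity
  haveI : NeZero (4 * N) := ⟨h4N⟩
  have hu : IsUnit ((b : ZMod (4 * N))) := (ZMod.isUnit_iff_coprime b (4 * N)).mpr hco
  obtain ⟨p, hpgt, hp, hpe⟩ := Nat.forall_exists_prime_gt_and_eq_mod hu 1
  have hmod : p ≡ b [MOD 4 * N] := (ZMod.natCast_eq_natCast_iff p b (4 * N)).mp hpe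
  have hpodd : Odd p := by
    have h2 : p % 2 = b % 2 := hmod.of_dvd (by omega)
    rw [Nat.odd_iff] at *
    omega
  have hpnd : ¬ p ∣ N := by
    intro hdvd
    have hp4 : p ∣ 4 * N := Dvd.dvd.mul_left hdvd 4
    have hbp : b % p = p % p := (hmod.symm).of_dvd hp4
    have : p ∣ b := Nat.dvd_of_mod_eq_zero (by rwa [Nat.mod_self] at hbp)
    have h1 : p ∣ 1 := hco ▸ Nat.dvd_gcd this hp4
    exact hp.one_lt.ne' (Nat.eq_one_of_dvd_one h1)
  refine ⟨p, hp, hpodd, hpnd, ?_⟩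
  calc jacobiSym (N : ℤ) p = jacobiSym (N : ℤ) (p % (4 * (N : ℤ).natAbs)) := jacobiSym.mod_right _ hpodd
    _ = jacobiSym (N : ℤ) (b % (4 * (N : ℤ).natAbs)) := by rw [Int.natAbs_natCast]; exact congrArg _ hmod
    _ = jacobiSym (N : ℤ) b := (jacobiSym.mod_right _ hb).symm
    _ = -1 := hj

/-- A positive integer `N` is a perfect square if and only if the Jacobi symbol
`(N/n)` equals `1` for every odd prime `n` not dividing `N`. -/
theorem perfect_square_iff_jacobiSym (N : ℕ) (hN : 0 < N) :
    IsSquare N ↔ ∀ n : ℕ, n.Prime → Odd n → ¬ n ∣ N → jacobiSym (N : ℤ) n = 1 := by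
  constructor
  · rintro ⟨m, hm⟩ n hn hnodd hndvd
    have hcast : (N : ℤ) = (m : ℤ) * (m : ℤ) := by exact_mod_cast hm
    rw [hcast, ← sq]
    refine jacobiSym.sq_one' ?_
    have hnm : ¬ n ∣ m := fun h => hndvd (hm ▸ Dvd.dvd.mul_right h m)
    have : Nat.Coprime m n := Nat.coprime_comm.mp ((hn.coprime_iff_not_dvd).mpr hnm)
    simpa [Int.gcd_natCast_natCast] using this
  · intro h
    by_contra hns
    have : ¬ ∀ p, Even (N.factorization p) := fun he =>
      hns (isSquare_of_even_factorization' hN.ne' he)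
    push_neg at this
    obtain ⟨q, hqe⟩ := this
    rw [Nat.not_even_iff_odd] at hqe
    have hqp : q.Prime := by
      by_contra hq
      rw [Nat.factorization_eq_zero_of_not_prime N hq] at hqe
      have := Nat.odd_iff.mp hqe
      omega
    obtain ⟨b, hbodd, hbco, hbj⟩ :
        ∃ b : ℕ, Odd b ∧ Nat.Coprime b (4 * N) ∧ jacobiSym (N : ℤ) b = -1 := by
      rcases eq_or_ne q 2 with rfl | hq2
      · exact exists_jacobi_neg_two N hN hqe
      · exact exists_jacobi_neg_odd N hN q hqp hq2 hqe
    obtain ⟨p, hp, hpodd, hpnd, hpj⟩ := exists_prime_jacobi_neg_of N hN hbodd hbco hbj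
    have := h p hp hpodd hpnd
    omega
end

section
/- Let G be a finite abelian group, B: G × G → U(1) a non-degenerate symmetric bilinear pairing, and L ⊆ G a subgroup with |L|² = |G| such that B restricted to L × L is trivial. Then the homomorphism G/L → Hom(L, U(1)) induced by B is an isomorphism. -/
/-- Characters of a finite group into `Circle` are the same as characters into `ℂˣ`. -/
noncomputable def dualCircleEquivUnits (H : Type*) [CommGroup H] [Finite H] :
    (H →* Circle) ≃* (H →* ℂˣ) where
  toFun χ := Circle.toUnits.comp χ
  invFun φ := {
    toFun := fun h => ⟨((φ h : ℂˣ) : ℂ), by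
      have hpow : (((φ h : ℂˣ) : ℂ)) ^ (Nat.card H) = 1 := by
        have h1 : φ h ^ (Nat.card H) = 1 := by
          rw [← map_pow, pow_card_eq_one', map_one]
        calc (((φ h : ℂˣ) : ℂ)) ^ (Nat.card H) = ((φ h ^ (Nat.card H) : ℂˣ) : ℂ) := by
              push_cast; ring
          _ = 1 := by rw [h1]; rfl
      exact mem_sphere_zero_iff_norm.2 <|
        Complex.norm_eq_one_of_pow_eq_one hpow Nat.card_pos.ne'⟩
    map_one' := by ext; simp
    map_mul' := fun a b => by ext; simp; rfl }
  left_inv χ := by ext h; rfl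
  right_inv φ := by ext h; rfl
  map_mul' χ₁ χ₂ := by ext h; simp

/-- The character group of a finite abelian group (with values in `Circle`) has the
same cardinality. -/
theorem card_dualCircle (H : Type*) [CommGroup H] [Finite H] :
    Nat.card (H →* Circle) = Nat.card H := by
  have : NeZero (((Monoid.exponent H) : ℕ) : ℂ) :=
    ⟨by exact_mod_cast (Monoid.exponent_ne_zero_of_finite (G := H))⟩
  obtain ⟨e⟩ := CommGroup.monoidHom_mulEquiv_of_hasEnoughRootsOfUnity H ℂ
  calc Nat.card (H →* Circle) = Nat.card (H →* ℂˣ) :=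
        Nat.card_congr (dualCircleEquivUnits H).toEquiv
    _ = Nat.card H := Nat.card_congr e.toEquiv

theorem finite_dualCircle (H : Type*) [CommGroup H] [Finite H] :
    Finite (H →* Circle) := by
  have h : 0 < Nat.card (H →* Circle) := by
    rw [card_dualCircle]; exact Nat.card_pos
  exact (Nat.card_pos_iff.mp h).2

/-- If `B` is a non-degenerate symmetric bilinear pairing on a finite abelian group `G`
and `L` is a subgroup with `|L|² = |G|` on which `B` is trivial, then the induced
homomorphism `G/L → Hom(L, U(1))` is an isomorphism. -/
theorem quotient_iso_dual_of_lagrangian {G : Type*} [CommGroup G] [Fintype G]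
    (B : G → G → Circle)
    (hbil : ∀ a b c : G, B (a * b) c = B a c * B b c)
    (hsymm : ∀ a b : G, B a b = B b a)
    (hnd : ∀ a : G, (∀ b : G, B a b = 1) → a = 1)
    (L : Subgroup G) (hcard : Nat.card L ^ 2 = Nat.card G)
    (htriv : ∀ a b : L, B (a : G) (b : G) = 1) :
    ∃ e : (G ⧸ L) ≃* ((↥L) →* Circle),
      ∀ (g : G) (l : L), e (QuotientGroup.mk g) l = B g (l : G) := by
  classical
  haveI : Finite ((↥L) →* Circle) := finite_dualCircle _
  haveI : Finite (G →* Circle) := finite_dualCircle _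
  have hbil' : ∀ a b c : G, B a (b * c) = B a b * B a c := fun a b c => by
    rw [hsymm, hbil, hsymm b a, hsymm c a]
  -- the map G →* (L →* Circle)
  let φ : G →* ((↥L) →* Circle) :=
    MonoidHom.mk' (fun g => MonoidHom.mk' (fun l => B g (l : G)) (fun a b => hbil' g a b))
      (fun a b => MonoidHom.ext fun l => hbil a b (l : G))
  -- the map G →* (G →* Circle)
  let Φ : G →* (G →* Circle) :=
    MonoidHom.mk' (fun g => MonoidHom.mk' (fun x => B g x) (fun a b => hbil' g a b))
      (fun a b => MonoidHom.ext fun x => hbil a b x)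
  have hΦinj : Function.Injective Φ := by
    rw [injective_iff_map_eq_one]
    intro a ha
    exact hnd a fun b => congrFun (congrArg DFunLike.coe ha) b
  have hLcard : Nat.card (G ⧸ L) = Nat.card L := by
    have h := Subgroup.card_eq_card_quotient_mul_card_subgroup L
    have hLpos : 0 < Nat.card L := Nat.card_pos
    rw [← hcard, pow_two] at h
    exact (Nat.eq_of_mul_eq_mul_right hLpos h.symm)
  -- restriction of characters of G to L
  let res : (G →* Circle) →* ((↥L) →* Circle) :=
    { toFun := fun χ => χ.comp L.subtype
      map_one' := rfl
      map_mul' := fun a b => rfl }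
  -- characters of G/L biject with ker res
  let F : ((G ⧸ L) →* Circle) → res.ker := fun ψ =>
    ⟨ψ.comp (QuotientGroup.mk' L), by
      rw [MonoidHom.mem_ker]
      refine MonoidHom.ext fun l => ?_
      show ψ (((l : G) : G ⧸ L)) = 1
      rw [(QuotientGroup.eq_one_iff (l : G)).mpr l.2, map_one]⟩
  have hker_card : Nat.card (res.ker) ≤ Nat.card L := by
    have hinj : Function.Injective F := by
      intro ψ₁ ψ₂ h
      have h' := congrArg Subtype.val h
      refine MonoidHom.ext fun x => ?_
      induction x using QuotientGroup.induction_on with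
      | H g => exact congrFun (congrArg DFunLike.coe h') g
    have hsurj : Function.Surjective F := by
      rintro ⟨χ, hχ⟩
      have hχ' : ∀ l ∈ L, χ l = 1 := by
        intro l hl
        have h1 := congrFun (congrArg DFunLike.coe (MonoidHom.mem_ker.mp hχ)) ⟨l, hl⟩
        exact h1
      refine ⟨QuotientGroup.lift L χ hχ', ?_⟩
      refine Subtype.ext (MonoidHom.ext fun g => ?_)
      rfl
    have hc : Nat.card res.ker = Nat.card ((G ⧸ L) →* Circle) :=
      (Nat.card_congr (Equiv.ofBijective F ⟨hinj, hsurj⟩)).symm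
    rw [hc, card_dualCircle, hLcard]
  -- kernel of φ is L
  have hkerφ : φ.ker = L := by
    refine (Subgroup.eq_of_le_of_card_ge ?_ ?_).symm
    · intro l hl
      refine MonoidHom.mem_ker.mpr (MonoidHom.ext fun m => ?_)
      exact htriv ⟨l, hl⟩ m
    · -- card φ.ker ≤ card L : map φ.ker into res.ker via Φ
      have hinj2 : Function.Injective (fun g : φ.ker => (⟨Φ (g : G), by
          rw [MonoidHom.mem_ker]
          refine MonoidHom.ext fun l => ?_
          show B (g : G) (l : G) = 1
          exact congrFun (congrArg DFunLike.coe (MonoidHom.mem_ker.mp g.2)) l⟩ : res.ker)) := by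
        intro a b h
        have h' := congrArg Subtype.val h
        exact Subtype.ext (hΦinj h')
      calc Nat.card φ.ker ≤ Nat.card res.ker := Nat.card_le_card_of_injective _ hinj2
        _ ≤ Nat.card L := hker_card
  -- the induced map on the quotient
  have hLle : L ≤ φ.ker := le_of_eq hkerφ.symm
  let ψ : (G ⧸ L) →* ((↥L) →* Circle) :=
    QuotientGroup.lift L φ fun l hl => MonoidHom.mem_ker.mp (hLle hl)
  have hψinj : Function.Injective ψ := by
    rw [injective_iff_map_eq_one]
    intro x hx
    induction x using QuotientGroup.induction_on with
    | H g =>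
      have hg : g ∈ φ.ker := MonoidHom.mem_ker.mpr hx
      rw [hkerφ] at hg
      exact (QuotientGroup.eq_one_iff g).mpr hg
  have hψbij : Function.Bijective ψ := by
    refine hψinj.bijective_of_nat_card_le ?_
    rw [hLcard, card_dualCircle]
  exact ⟨MulEquiv.ofBijective ψ hψbij, fun g l => rfl⟩
end

section
/- Let G be a finite abelian group, θ: G → U(1) a quadratic form (i.e., θ(a^m) = θ(a)^{m²} for all m ∈ ℤ and the map B(a,b) = θ(ab)/(θ(a)θ(b)) is bilinear) with B non-degenerate, and suppose L ⊆ G is a subgroup with |L|² = |G| and θ(a) = 1 for all a ∈ L. Then the sum ∑_{a∈G} θ(a) equals |L| (in particular it is a positive real number). -/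
/-- A multiplicative function on a finite commutative group which is not identically 1
has zero sum. -/
lemma aux_char_sum_eq_zero {H : Type*} [CommGroup H] [Fintype H] (ψ : H → ℂ)
    (hmul : ∀ a b : H, ψ (a * b) = ψ a * ψ b) (g : H) (hg : ψ g ≠ 1) :
    ∑ x : H, ψ x = 0 := by
  have h1 : ∑ x : H, ψ ((Equiv.mulLeft g) x) = ∑ x : H, ψ x :=
    Equiv.sum_comp (Equiv.mulLeft g) ψ
  simp only [Equiv.coe_mulLeft, hmul, ← Finset.mul_sum] at h1
  have h2 : (ψ g - 1) * ∑ x : H, ψ x = 0 := by ring_nf; linear_combination h1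
  rcases mul_eq_zero.mp h2 with h | h
  · exact absurd (sub_eq_zero.mp h) hg
  · exact h

/-- If `θ : G → U(1)` is a quadratic form on a finite abelian group whose associated
bilinear pairing `B(a,b) = θ(ab)/(θ(a)θ(b))` is non-degenerate, and `L` is a Lagrangian
subgroup (`|L|² = |G|`, `θ ≡ 1` on `L`), then `∑_{a ∈ G} θ(a) = |L|`. -/
theorem gauss_sum_eq_card_lagrangian {G : Type*} [CommGroup G] [Fintype G]
    (θ : G → ℂ) (habs : ∀ a : G, ‖θ a‖ = 1)
    (hquad : ∀ (a : G) (m : ℤ), θ (a ^ m) = θ a ^ (m ^ 2))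
    (B : G → G → ℂ) (hB : ∀ a b : G, B a b = θ (a * b) / (θ a * θ b))
    (hbil : ∀ a b c : G, B (a * b) c = B a c * B b c)
    (hnd : ∀ a : G, (∀ b : G, B a b = 1) → a = 1)
    (L : Subgroup G) (hcard : Nat.card L ^ 2 = Nat.card G)
    (htriv : ∀ a : L, θ (a : G) = 1) :
    ∑ a : G, θ a = (Nat.card L : ℂ) := by
  classical
  -- basic facts
  have hθne : ∀ a : G, θ a ≠ 0 := by
    intro a h
    have := habs a
    rw [h] at this
    simp at this
  have hθ1 : θ (1 : G) = 1 := htriv 1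
  have hBsymm : ∀ a b : G, B a b = B b a := by
    intro a b; rw [hB, hB, mul_comm a b, mul_comm (θ a) (θ b)]
  have hbil' : ∀ a b c : G, B a (b * c) = B a b * B a c := by
    intro a b c; rw [hBsymm, hbil, hBsymm a b, hBsymm a c]
  have hmul : ∀ a x : G, θ (a * x) = θ a * θ x * B a x := by
    intro a x
    have h1 := hθne a
    have h2 := hθne x
    rw [hB]
    field_simp
  have hB1 : ∀ x : G, B 1 x = 1 := by
    intro x; rw [hB, one_mul, hθ1, one_mul, div_self (hθne x)]
  -- B is 1 on L × L
  have hBL : ∀ (l : L) (x : G), x ∈ L → B (l : G) x = 1 := by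
    intro l x hx
    rw [hB, htriv l, htriv ⟨x, hx⟩, one_mul, htriv ⟨(l : G) * x, mul_mem l.2 hx⟩]
    norm_num
  set S := ∑ a : G, θ a with hS
  set nL : ℕ := Nat.card L with hnL
  have hnLcard : nL = Fintype.card L := Nat.card_eq_fintype_card
  have hnLpos : 0 < nL := Nat.card_pos
  have hnLne : (nL : ℂ) ≠ 0 := Nat.cast_ne_zero.mpr hnLpos.ne'
  -- inner sum T
  set T : G → ℂ := fun x => ∑ l : L, B (l : G) x with hT
  have hTval : ∀ x : G, T x = if ∀ y ∈ L, B y x = 1 then (nL : ℂ) else 0 := by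
    intro x
    by_cases h : ∀ y ∈ L, B y x = 1
    · rw [if_pos h]
      calc T x = ∑ _l : L, (1 : ℂ) := Finset.sum_congr rfl (fun l _ => h l l.2)
        _ = (nL : ℂ) := by simp [hnLcard]
    · rw [if_neg h]
      push_neg at h
      obtain ⟨g, hgL, hg⟩ := h
      exact aux_char_sum_eq_zero (fun l : L => B (l : G) x)
        (by intro a b; push_cast; exact hbil a b x) ⟨g, hgL⟩ hg
  set P : Finset G := Finset.univ.filter (fun x => ∀ y ∈ L, B y x = 1) with hP
  set F : Finset G := Finset.univ.filter (· ∈ L) with hF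
  have hFcard : F.card = nL := by
    rw [hnLcard]
    exact (Fintype.card_subtype _).symm
  -- sum of T over G, first way
  have hsum1 : ∑ x : G, T x = (nL : ℂ) * P.card := by
    simp_rw [hTval]
    rw [← Finset.sum_filter, Finset.sum_const, ← hP, nsmul_eq_mul, mul_comm]
  -- inner sums over G
  have hinner : ∀ l : L, ∑ x : G, B (l : G) x = if (l : G) = 1 then (Fintype.card G : ℂ) else 0 := by
    intro l
    by_cases h : (l : G) = 1
    · rw [if_pos h, h]
      simp [hB1]
    · rw [if_neg h]
      have h2 : ¬ ∀ b : G, B (l : G) b = 1 := fun hh => h (hnd _ hh)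
      push_neg at h2
      obtain ⟨g, hg⟩ := h2
      exact aux_char_sum_eq_zero (fun x : G => B (l : G) x) (fun a b => hbil' _ a b) g hg
  -- sum of T over G, second way
  have hsum2 : ∑ x : G, T x = (Fintype.card G : ℂ) := by
    rw [show ∑ x : G, T x = ∑ l : L, ∑ x : G, B (l : G) x from Finset.sum_comm]
    simp_rw [hinner]
    simp [OneMemClass.coe_eq_one]
  have hGcard : (Fintype.card G : ℂ) = (nL : ℂ) * nL := by
    have : Nat.card G = Fintype.card G := Nat.card_eq_fintype_card
    rw [← this, ← hcard]
    push_cast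
    ring
  have hPcard : (P.card : ℂ) = (nL : ℂ) := by
    have := hsum1.symm.trans (hsum2.trans hGcard)
    exact mul_left_cancel₀ hnLne this
  have hPcard' : P.card = nL := Nat.cast_injective hPcard
  have hFP : F ⊆ P := by
    intro x hx
    rw [hF, Finset.mem_filter] at hx
    rw [hP, Finset.mem_filter]
    exact ⟨Finset.mem_univ x, fun y hy => hBL ⟨y, hy⟩ x hx.2⟩
  have hPF : F = P := Finset.eq_of_subset_of_card_le hFP (by rw [hPcard', hFcard])
  -- main computation
  have hmain : (nL : ℂ) * S = (nL : ℂ) * (nL : ℂ) := by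
    calc (nL : ℂ) * S = ∑ _l : L, S := by rw [Finset.sum_const, Finset.card_univ,
          ← hnLcard, nsmul_eq_mul]
      _ = ∑ l : L, ∑ x : G, θ ((l : G) * x) := by
          refine Finset.sum_congr rfl fun l _ => ?_
          exact (Equiv.sum_comp (Equiv.mulLeft (l : G)) θ).symm
      _ = ∑ x : G, ∑ l : L, θ ((l : G) * x) := Finset.sum_comm
      _ = ∑ x : G, θ x * T x := by
          refine Finset.sum_congr rfl fun x _ => ?_
          rw [hT, Finset.mul_sum]
          refine Finset.sum_congr rfl fun l _ => ?_
          rw [hmul, htriv l, one_mul]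
      _ = ∑ x : G, (if ∀ y ∈ L, B y x = 1 then θ x * nL else 0) := by
          refine Finset.sum_congr rfl fun x _ => ?_
          rw [hTval, mul_ite, mul_zero]
      _ = ∑ x ∈ P, θ x * nL := by rw [← Finset.sum_filter, ← hP]
      _ = ∑ x ∈ F, θ x * nL := by rw [hPF]
      _ = ∑ x ∈ F, (nL : ℂ) := by
          refine Finset.sum_congr rfl fun x hx => ?_
          rw [hF, Finset.mem_filter] at hx
          rw [htriv ⟨x, hx.2⟩, one_mul]
      _ = (nL : ℂ) * nL := by rw [Finset.sum_const, hFcard, nsmul_eq_mul]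
  exact mul_left_cancel₀ hnLne hmain
end

section
/- Let G be a finite abelian group with θ: G → U(1) a quadratic refinement of a non-degenerate bilinear pairing B. Then |∑_{a∈G} θ(a)|² = |G|; equivalently, the Gauss sum ∑_{a∈G} θ(a) has absolute value √|G| (in particular it is nonzero, so the 'chiral central charge phase' ∑θ(a)/|∑θ(a)| is well defined). -/
/-- For a quadratic refinement `θ` of a non-degenerate bilinear pairing on a finite abelian
group `G`, the Gauss sum `∑_{a∈G} θ(a)` has absolute value `√|G|`; in particular it is
nonzero, so its phase is well defined. -/
theorem gauss_sum_abs_sq_eq_card {G : Type*} [CommGroup G] [Fintype G]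
    (θ : G → ℂ) (habs : ∀ a : G, ‖θ a‖ = 1)
    (B : G → G → ℂ) (hB : ∀ a b : G, B a b = θ (a * b) / (θ a * θ b))
    (hbil : ∀ a b c : G, B (a * b) c = B a c * B b c)
    (hnd : ∀ a : G, (∀ b : G, B a b = 1) → a = 1) :
    ‖∑ a : G, θ a‖ ^ 2 = (Nat.card G : ℝ) ∧ (∑ a : G, θ a) ≠ 0 := by
  classical
  have hθne : ∀ a : G, θ a ≠ 0 := by
    intro a h
    have := habs a
    rw [h] at this; simp at this
  have hBne : ∀ a b : G, B a b ≠ 0 := by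
    intro a b
    rw [hB]
    exact div_ne_zero (hθne _) (mul_ne_zero (hθne _) (hθne _))
  have hsymm : ∀ a b : G, B a b = B b a := by
    intro a b; rw [hB, hB, mul_comm a b, mul_comm (θ a) (θ b)]
  -- B 1 b = 1
  have hB1 : ∀ b : G, B 1 b = 1 := by
    intro b
    have h : B 1 b * 1 = B 1 b * B 1 b := by
      rw [mul_one]
      conv_lhs => rw [show (1 : G) = 1 * 1 by simp, hbil]
    exact (mul_left_cancel₀ (hBne 1 b) h).symm
  -- θ 1 = 1
  have hθ1 : θ 1 = 1 := by
    have h := hB1 1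
    rw [hB] at h
    field_simp at h
    rw [pow_two, div_mul_eq_div_div, mul_one, div_self (hθne 1), one_div, inv_eq_one] at h
    exact h
  -- quadratic refinement identity
  have hmul : ∀ a b : G, θ (a * b) = θ a * θ b * B a b := by
    intro a b
    rw [hB, mul_comm (θ a * θ b) _, div_mul_cancel₀ _ (mul_ne_zero (hθne a) (hθne b))]
  -- conj θ a = (θ a)⁻¹
  have hconj : ∀ a : G, (starRingEnd ℂ) (θ a) = (θ a)⁻¹ := by
    intro a
    have h1 : θ a * (starRingEnd ℂ) (θ a) = 1 := by
      rw [Complex.mul_conj]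
      rw [← Complex.sq_norm, habs a]
      norm_num
    exact eq_inv_of_mul_eq_one_right h1
  -- second-slot additivity
  have hbil2 : ∀ a b c : G, B a (b * c) = B a b * B a c := by
    intro a b c
    rw [hsymm a, hbil, hsymm b, hsymm c]
  -- inner sum vanishing
  have hinner : ∀ c : G, (∑ b : G, B c b) = if c = 1 then (Fintype.card G : ℂ) else 0 := by
    intro c
    by_cases hc : c = 1
    · subst hc
      simp [hB1]
    · simp only [if_neg hc]
      obtain ⟨b0, hb0⟩ : ∃ b0, B c b0 ≠ 1 := by
        by_contra h
        push_neg at h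
        exact hc (hnd c h)
      have hre : (∑ b : G, B c b) = ∑ b : G, B c (b0 * b) :=
        (Fintype.sum_bijective (fun b => b0 * b)
          (Group.mulLeft_bijective b0) _ _ (fun b => rfl)).symm
      have : (∑ b : G, B c b) = B c b0 * ∑ b : G, B c b := by
        conv_lhs => rw [hre]
        rw [Finset.mul_sum]
        exact Finset.sum_congr rfl fun b _ => hbil2 c b0 b
      have h2 : (1 - B c b0) * ∑ b : G, B c b = 0 := by
        linear_combination this
      rcases mul_eq_zero.mp h2 with h | h
      · exact absurd (by linear_combination -h) hb0
      · exact h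
  -- main computation
  have hmain : (∑ a : G, θ a) * (starRingEnd ℂ) (∑ a : G, θ a) = (Fintype.card G : ℂ) := by
    rw [map_sum, Finset.sum_mul_sum]
    have step : ∀ b : G, (∑ a : G, θ a * (starRingEnd ℂ) (θ b)) = ∑ c : G, θ c * B c b := by
      intro b
      rw [show (∑ a : G, θ a * (starRingEnd ℂ) (θ b))
            = ∑ c : G, θ (c * b) * (starRingEnd ℂ) (θ b) from
        (Fintype.sum_bijective (fun c => c * b)
          (Group.mulRight_bijective b) _ _ (fun c => rfl)).symm]
      refine Finset.sum_congr rfl fun c _ => ?_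
      rw [hmul, hconj]
      field_simp [hθne b]
    calc (∑ a : G, ∑ b : G, θ a * (starRingEnd ℂ) (θ b))
        = ∑ b : G, ∑ a : G, θ a * (starRingEnd ℂ) (θ b) := Finset.sum_comm
      _ = ∑ b : G, ∑ c : G, θ c * B c b := Finset.sum_congr rfl fun b _ => step b
      _ = ∑ c : G, ∑ b : G, θ c * B c b := Finset.sum_comm
      _ = ∑ c : G, θ c * ∑ b : G, B c b := by
            refine Finset.sum_congr rfl fun c _ => ?_; rw [Finset.mul_sum]
      _ = ∑ c : G, θ c * (if c = 1 then (Fintype.card G : ℂ) else 0) :=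
            Finset.sum_congr rfl fun c _ => by rw [hinner]
      _ = (Fintype.card G : ℂ) := by
            simp [mul_ite, hθ1]
  have habs2 : ‖∑ a : G, θ a‖ ^ 2 = (Nat.card G : ℝ) := by
    have := congrArg Complex.re hmain
    rw [Complex.mul_conj] at this
    rw [Complex.sq_norm, Nat.card_eq_fintype_card]
    simpa using this
  refine ⟨habs2, fun h => ?_⟩
  rw [h] at habs2
  simp at habs2
  exact absurd habs2.symm (Nat.cast_ne_zero.mpr Fintype.card_pos.ne')
end

section
/- Let C and D be n×n integer matrices with nonzero determinants such that gcd(det C, det D) = 1. Then C and D are coprime: there exist integer matrices A and B with A·Dᵀ − B·Cᵀ = 1 (identity matrix). -/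
open Matrix

/-- Two `n×n` integer matrices with coprime (nonzero) determinants are coprime:
there exist integer matrices `A`, `B` with `A·Dᵀ − B·Cᵀ = 1`. -/
theorem coprime_of_coprime_det {n : ℕ} (C D : Matrix (Fin n) (Fin n) ℤ)
    (hC : C.det ≠ 0) (hD : D.det ≠ 0) (h : Int.gcd C.det D.det = 1) :
    ∃ A B : Matrix (Fin n) (Fin n) ℤ, A * Dᵀ - B * Cᵀ = 1 := by
  obtain ⟨u, v, huv⟩ := Int.isCoprime_iff_gcd_eq_one.mpr h
  refine ⟨v • adjugate Dᵀ, (-u) • adjugate Cᵀ, ?_⟩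
  rw [smul_mul, smul_mul, adjugate_mul, adjugate_mul, det_transpose, det_transpose,
    smul_smul, smul_smul, ← sub_smul]
  rw [show v * D.det - -u * C.det = u * C.det + v * D.det by ring, huv, one_smul]
end

section
/- Let K and L be integer square matrices with nonzero determinants. If gcd(|det K|, |det L|) ≠ 1, then the matrices K⊗1 and 1⊗L (Kronecker products with identity matrices of the appropriate sizes) are not coprime; i.e., there exist no integer matrices A, B with A·(1⊗L)ᵀ − B·(K⊗1)ᵀ = 1. -/
open Matrix Kronecker

/-- If `gcd(|det K|, |det L|) ≠ 1` then the Kronecker products `K ⊗ 1` and `1 ⊗ L`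
are not coprime: no integer matrices `A`, `B` satisfy `A·(1⊗L)ᵀ − B·(K⊗1)ᵀ = 1`. -/
theorem kronecker_not_coprime {k l : ℕ}
    (K : Matrix (Fin k) (Fin k) ℤ) (L : Matrix (Fin l) (Fin l) ℤ)
    (hK : K.det ≠ 0) (hL : L.det ≠ 0)
    (h : Nat.gcd K.det.natAbs L.det.natAbs ≠ 1) :
    ¬ ∃ A B : Matrix (Fin k × Fin l) (Fin k × Fin l) ℤ,
        A * ((1 : Matrix (Fin k) (Fin k) ℤ) ⊗ₖ L)ᵀ -
          B * (K ⊗ₖ (1 : Matrix (Fin l) (Fin l) ℤ))ᵀ = 1 := by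
  rintro ⟨A, B, hAB⟩
  obtain ⟨p, hp, hpd⟩ := Nat.exists_prime_and_dvd h
  haveI : Fact p.Prime := ⟨hp⟩
  have hpK : (p : ℤ) ∣ K.det :=
    Int.dvd_natAbs.mp (Int.natCast_dvd_natCast.mpr (hpd.trans (Nat.gcd_dvd_left _ _)))
  have hpL : (p : ℤ) ∣ L.det :=
    Int.dvd_natAbs.mp (Int.natCast_dvd_natCast.mpr (hpd.trans (Nat.gcd_dvd_right _ _)))
  set c := Int.castRingHom (ZMod p) with hc
  have hdK : ((Kᵀ).map c).det = 0 := by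
    rw [show Kᵀ.map ⇑c = c.mapMatrix Kᵀ from rfl, ← RingHom.map_det]
    simpa [Matrix.det_transpose, hc] using (ZMod.intCast_zmod_eq_zero_iff_dvd _ _).mpr hpK
  have hdL : ((Lᵀ).map c).det = 0 := by
    rw [show Lᵀ.map ⇑c = c.mapMatrix Lᵀ from rfl, ← RingHom.map_det]
    simpa [Matrix.det_transpose, hc] using (ZMod.intCast_zmod_eq_zero_iff_dvd _ _).mpr hpL
  obtain ⟨v, hv, hKv⟩ := (Matrix.exists_mulVec_eq_zero_iff).mpr hdK
  obtain ⟨w, hw, hLw⟩ := (Matrix.exists_mulVec_eq_zero_iff).mpr hdL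
  obtain ⟨i0, hi0⟩ := Function.ne_iff.mp hv
  obtain ⟨j0, hj0⟩ := Function.ne_iff.mp hw
  set u : Fin k × Fin l → ZMod p := fun x => v x.1 * w x.2 with hu
  have hAB' : (A.map c) * (((1 : Matrix (Fin k) (Fin k) ℤ) ⊗ₖ L)ᵀ).map c -
      (B.map c) * ((K ⊗ₖ (1 : Matrix (Fin l) (Fin l) ℤ))ᵀ).map c = 1 := by
    have := congrArg (fun M => Matrix.map M c) hAB
    simpa [Matrix.map_sub, Matrix.map_mul, Matrix.map_one c c.map_zero c.map_one] using this
  have h1 : ((((1 : Matrix (Fin k) (Fin k) ℤ) ⊗ₖ L)ᵀ).map c).mulVec u = 0 := by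
    ext ⟨i, j⟩
    have hLwj : ∑ j', c (L j' j) * w j' = 0 := by
      have := congrFun hLw j
      simpa [Matrix.mulVec, dotProduct] using this
    simp only [Matrix.mulVec, dotProduct, Matrix.map_apply, Matrix.transpose_apply,
      Matrix.kroneckerMap_apply, hu, Fintype.sum_prod_type, Pi.zero_apply,
      Matrix.one_apply]
    rw [Finset.sum_eq_single i]
    · simp only [if_true, eq_self_iff_true, one_mul]
      calc ∑ j', c (L j' j) * (v i * w j')
          = v i * ∑ j', c (L j' j) * w j' := by
            rw [Finset.mul_sum]; apply Finset.sum_congr rfl; intro j' _; ring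
        _ = 0 := by rw [hLwj, mul_zero]
    · intro b _ hb
      simp [hb]
    · simp
  have h2 : (((K ⊗ₖ (1 : Matrix (Fin l) (Fin l) ℤ))ᵀ).map c).mulVec u = 0 := by
    ext ⟨i, j⟩
    have hKvi : ∑ i', c (K i' i) * v i' = 0 := by
      have := congrFun hKv i
      simpa [Matrix.mulVec, dotProduct] using this
    simp only [Matrix.mulVec, dotProduct, Matrix.map_apply, Matrix.transpose_apply,
      Matrix.kroneckerMap_apply, hu, Fintype.sum_prod_type, Pi.zero_apply,
      Matrix.one_apply]
    rw [Finset.sum_comm]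
    rw [Finset.sum_eq_single j]
    · simp only [if_true, eq_self_iff_true, mul_one]
      calc ∑ i', c (K i' i) * (v i' * w j)
          = (∑ i', c (K i' i) * v i') * w j := by
            rw [Finset.sum_mul]; apply Finset.sum_congr rfl; intro i' _; ring
        _ = 0 := by rw [hKvi, zero_mul]
    · intro b _ hb
      simp [hb]
    · simp
  have hu0 : u = 0 := by
    have := congrArg (fun M => Matrix.mulVec M u) hAB'
    simpa [Matrix.sub_mulVec, ← Matrix.mulVec_mulVec, h1, h2] using this.symm
  have : v i0 * w j0 = 0 := congrFun hu0 (i0, j0)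
  exact (mul_ne_zero (by simpa using hi0) (by simpa using hj0)) this
end

section
/- Let G = G₁ × G₂ be a product of finite abelian groups with coprime orders, equipped with quadratic forms θᵢ on Gᵢ refining non-degenerate pairings, and θ(a₁,a₂) = θ₁(a₁)θ₂(a₂). Then G has a Lagrangian subgroup (a subgroup L of order √|G| with θ trivial on L) if and only if both G₁ and G₂ have Lagrangian subgroups for θ₁ and θ₂ respectively. -/
/-- For a product `G = G₁ × G₂` of finite abelian groups of coprime orders with quadratic
forms `θᵢ` refining non-degenerate pairings and `θ(a₁,a₂) = θ₁(a₁)θ₂(a₂)`, the product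
has a Lagrangian subgroup if and only if both factors do. -/
theorem lagrangian_of_product_iff {G₁ G₂ : Type*}
    [CommGroup G₁] [Fintype G₁] [CommGroup G₂] [Fintype G₂]
    (hcop : Nat.Coprime (Nat.card G₁) (Nat.card G₂))
    (θ₁ : G₁ → Circle) (θ₂ : G₂ → Circle)
    (hquad₁ : ∀ (a : G₁) (m : ℤ), θ₁ (a ^ m) = θ₁ a ^ (m ^ 2))
    (hquad₂ : ∀ (a : G₂) (m : ℤ), θ₂ (a ^ m) = θ₂ a ^ (m ^ 2))
    (B₁ : G₁ → G₁ → Circle) (hB₁ : ∀ a b : G₁, B₁ a b = θ₁ (a * b) / (θ₁ a * θ₁ b))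
    (B₂ : G₂ → G₂ → Circle) (hB₂ : ∀ a b : G₂, B₂ a b = θ₂ (a * b) / (θ₂ a * θ₂ b))
    (hbil₁ : ∀ a b c : G₁, B₁ (a * b) c = B₁ a c * B₁ b c)
    (hbil₂ : ∀ a b c : G₂, B₂ (a * b) c = B₂ a c * B₂ b c)
    (hnd₁ : ∀ a : G₁, (∀ b : G₁, B₁ a b = 1) → a = 1)
    (hnd₂ : ∀ a : G₂, (∀ b : G₂, B₂ a b = 1) → a = 1) :
    (∃ L : Subgroup (G₁ × G₂), Nat.card L ^ 2 = Nat.card (G₁ × G₂) ∧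
        ∀ x ∈ L, θ₁ x.1 * θ₂ x.2 = 1) ↔
      ((∃ L₁ : Subgroup G₁, Nat.card L₁ ^ 2 = Nat.card G₁ ∧ ∀ a ∈ L₁, θ₁ a = 1) ∧
       (∃ L₂ : Subgroup G₂, Nat.card L₂ ^ 2 = Nat.card G₂ ∧ ∀ a ∈ L₂, θ₂ a = 1)) := by
  constructor
  · rintro ⟨L, hcard, htriv⟩
    set n₁ := Nat.card G₁ with hn₁
    set n₂ := Nat.card G₂ with hn₂
    -- Bezout
    have hbez : ∃ u v : ℤ, (n₁ : ℤ) * u + (n₂ : ℤ) * v = 1 := by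
      refine ⟨Int.gcdA n₁ n₂, Int.gcdB n₁ n₂, ?_⟩
      have := Int.gcd_eq_gcd_ab (n₁ : ℤ) (n₂ : ℤ)
      rw [Int.gcd_natCast_natCast, hcop] at this
      simpa using this.symm
    obtain ⟨u, v, huv⟩ := hbez
    -- split elements of L
    have hsplit1 : ∀ x : G₁ × G₂, x ∈ L → ((x.1, 1) : G₁ × G₂) ∈ L := by
      intro x hx
      have key : x ^ ((n₂ : ℤ) * v) = (x.1, (1 : G₂)) := by
        have h1 : x.1 ^ ((n₂ : ℤ) * v) = x.1 := by
          have hx1 : x.1 ^ ((n₁ : ℤ)) = 1 := by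
            rw [zpow_natCast]; exact pow_card_eq_one'
          calc x.1 ^ ((n₂ : ℤ) * v) = x.1 ^ (1 - (n₁:ℤ) * u) := by ring_nf; rw [show (1 - (n₁:ℤ)*u) = (n₂:ℤ)*v by linarith]
            _ = x.1 := by rw [zpow_sub, zpow_one, zpow_mul, hx1, one_zpow, inv_one, mul_one]
        have h2 : x.2 ^ ((n₂ : ℤ) * v) = 1 := by
          have hx2 : x.2 ^ ((n₂ : ℤ)) = 1 := by
            rw [zpow_natCast]; exact pow_card_eq_one'
          rw [zpow_mul, hx2, one_zpow]
        exact Prod.ext h1 h2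
      rw [← key]; exact Subgroup.zpow_mem L hx _
    have hsplit2 : ∀ x : G₁ × G₂, x ∈ L → ((1, x.2) : G₁ × G₂) ∈ L := by
      intro x hx
      have key : x ^ ((n₁ : ℤ) * u) = ((1 : G₁), x.2) := by
        have h1 : x.1 ^ ((n₁ : ℤ) * u) = 1 := by
          have hx1 : x.1 ^ ((n₁ : ℤ)) = 1 := by
            rw [zpow_natCast]; exact pow_card_eq_one'
          rw [zpow_mul, hx1, one_zpow]
        have h2 : x.2 ^ ((n₁ : ℤ) * u) = x.2 := by
          have hx2 : x.2 ^ ((n₂ : ℤ)) = 1 := by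
            rw [zpow_natCast]; exact pow_card_eq_one'
          calc x.2 ^ ((n₁ : ℤ) * u) = x.2 ^ (1 - (n₂:ℤ) * v) := by rw [show (1 - (n₂:ℤ)*v) = (n₁:ℤ)*u by linarith]
            _ = x.2 := by rw [zpow_sub, zpow_one, zpow_mul, hx2, one_zpow, inv_one, mul_one]
        exact Prod.ext h1 h2
      rw [← key]; exact Subgroup.zpow_mem L hx _
    set L₁ : Subgroup G₁ := L.comap (MonoidHom.inl G₁ G₂) with hL₁
    set L₂ : Subgroup G₂ := L.comap (MonoidHom.inr G₁ G₂) with hL₂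
    have hmem1 : ∀ a : G₁, a ∈ L₁ ↔ ((a, 1) : G₁ × G₂) ∈ L := fun a => Iff.rfl
    have hmem2 : ∀ b : G₂, b ∈ L₂ ↔ ((1, b) : G₁ × G₂) ∈ L := fun b => Iff.rfl
    have hθ2one : θ₂ (1 : G₂) = 1 := by
      have := hquad₂ 1 0
      simpa using this
    have hθ1one : θ₁ (1 : G₁) = 1 := by
      have := hquad₁ 1 0
      simpa using this
    have hLprod : L = L₁.prod L₂ := by
      ext x
      constructor
      · intro hx
        exact ⟨(hmem1 x.1).mpr (hsplit1 x hx), (hmem2 x.2).mpr (hsplit2 x hx)⟩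
      · rintro ⟨h1, h2⟩
        have : ((x.1, 1) : G₁ × G₂) * (1, x.2) ∈ L :=
          Subgroup.mul_mem L ((hmem1 x.1).mp h1) ((hmem2 x.2).mp h2)
        simpa using this
    have hcardL : Nat.card L = Nat.card L₁ * Nat.card L₂ := by
      rw [hLprod]
      simpa using Nat.card_congr (Subgroup.prodEquiv L₁ L₂).toEquiv
    have hdvd1 : Nat.card L₁ ∣ n₁ := Subgroup.card_subgroup_dvd_card L₁
    have hdvd2 : Nat.card L₂ ∣ n₂ := Subgroup.card_subgroup_dvd_card L₂
    rw [Nat.card_prod, hcardL] at hcard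
    -- show Nat.card L₁ ^ 2 = n₁ and Nat.card L₂ ^ 2 = n₂
    have hsq1 : Nat.card L₁ ^ 2 ∣ n₁ := by
      have hcop1 : Nat.Coprime (Nat.card L₁ ^ 2) n₂ :=
        ((Nat.Coprime.coprime_dvd_left hdvd1 hcop).pow_left 2)
      have : Nat.card L₁ ^ 2 ∣ n₁ * n₂ := ⟨Nat.card L₂ ^ 2, by rw [← hcard]; ring⟩
      exact (Nat.Coprime.dvd_of_dvd_mul_right hcop1 this)
    have hsq2 : Nat.card L₂ ^ 2 ∣ n₂ := by
      have hcop2 : Nat.Coprime (Nat.card L₂ ^ 2) n₁ :=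
        ((Nat.Coprime.coprime_dvd_left hdvd2 hcop.symm).pow_left 2)
      have : Nat.card L₂ ^ 2 ∣ n₁ * n₂ := ⟨Nat.card L₁ ^ 2, by rw [← hcard]; ring⟩
      exact (Nat.Coprime.dvd_of_dvd_mul_left hcop2 this)
    obtain ⟨a, ha⟩ := hsq1
    obtain ⟨b, hb⟩ := hsq2
    have hn₁pos : 0 < n₁ := Nat.card_pos
    have hn₂pos : 0 < n₂ := Nat.card_pos
    have hab : a * b = 1 := by
      have key : (Nat.card L₁ * Nat.card L₂) ^ 2 * 1 = (Nat.card L₁ * Nat.card L₂) ^ 2 * (a * b) := by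
        rw [mul_one]
        calc (Nat.card L₁ * Nat.card L₂) ^ 2 = Nat.card G₁ * Nat.card G₂ := hcard
          _ = (Nat.card L₁ ^ 2 * a) * (Nat.card L₂ ^ 2 * b) := by
              rw [← show Nat.card G₁ = Nat.card L₁ ^ 2 * a from ha,
                ← show Nat.card G₂ = Nat.card L₂ ^ 2 * b from hb]
          _ = (Nat.card L₁ * Nat.card L₂) ^ 2 * (a * b) := by ring
      have hpos : 0 < (Nat.card L₁ * Nat.card L₂) ^ 2 := by
        rw [hcard]; exact Nat.mul_pos hn₁pos hn₂pos
      exact (Nat.eq_of_mul_eq_mul_left hpos key).symm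
    have ha1 : a = 1 := Nat.eq_one_of_mul_eq_one_right hab
    have hb1 : b = 1 := Nat.eq_one_of_mul_eq_one_left hab
    refine ⟨⟨L₁, by rw [ha1, mul_one] at ha; exact ha.symm, ?_⟩, ⟨L₂, by rw [hb1, mul_one] at hb; exact hb.symm, ?_⟩⟩
    · intro x hx
      have := htriv (x, 1) ((hmem1 x).mp hx)
      simpa [hθ2one] using this
    · intro x hx
      have := htriv (1, x) ((hmem2 x).mp hx)
      simpa [hθ1one] using this
  · rintro ⟨⟨L₁, hc1, ht1⟩, ⟨L₂, hc2, ht2⟩⟩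
    refine ⟨L₁.prod L₂, ?_, ?_⟩
    · have : Nat.card (L₁.prod L₂) = Nat.card L₁ * Nat.card L₂ := by
        simpa using Nat.card_congr (Subgroup.prodEquiv L₁ L₂).toEquiv
      rw [this, Nat.card_prod, mul_pow, hc1, hc2]
    · rintro ⟨x₁, x₂⟩ ⟨h1, h2⟩
      simp only [ht1 x₁ h1, ht2 x₂ h2, mul_one]
end

section
/- Let G be a finite abelian group, θ: G → U(1) a quadratic refinement of a non-degenerate bilinear pairing, and suppose L ⊆ G is a Lagrangian subgroup (|L|² = |G|, θ|_L ≡ 1). Then for any positive integer n coprime to |G|, the map a ↦ a^n is an automorphism of G preserving L, and the higher Gauss sum ∑_{a∈G} θ(a)ⁿ is real and positive, equal to |L| times a positive real number; in particular the higher central charge ξ_n = ∑θ(a)ⁿ/|∑θ(a)ⁿ| equals 1. -/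
/-- A multiplicative character sum over a finite group vanishes when the character
is nontrivial. -/
lemma aux_char_sum_zero {H : Type*} [Group H] [Fintype H] (χ : H → ℂ)
    (hχ : ∀ x y : H, χ (x * y) = χ x * χ y) (x : H) (hx : χ x ≠ 1) :
    ∑ y : H, χ y = 0 := by
  have h : χ x * ∑ y : H, χ y = ∑ y : H, χ y := by
    rw [Finset.mul_sum]
    calc ∑ y : H, χ x * χ y = ∑ y : H, χ (x * y) := by simp [hχ]
    _ = ∑ y : H, χ y := Fintype.sum_equiv (Equiv.mulLeft x) _ _ (fun y => rfl)
  have h2 : (χ x - 1) * ∑ y : H, χ y = 0 := by ring_nf; linear_combination h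
  rcases mul_eq_zero.mp h2 with h3 | h3
  · exact absurd (sub_eq_zero.mp h3) hx
  · exact h3

/-- For a finite abelian group `G` with quadratic refinement `θ` of a non-degenerate
pairing and Lagrangian subgroup `L`, and `n > 0` coprime to `|G|`: the map `a ↦ aⁿ` is an
automorphism of `G` preserving `L`, the higher Gauss sum `∑ θ(a)ⁿ` is `|L|` times a
positive real number, and the higher central charge `ξ_n` equals `1`. -/
theorem higher_central_charge_trivial_of_lagrangian {G : Type*} [CommGroup G] [Fintype G]
    (θ : G → ℂ) (habs : ∀ a : G, ‖θ a‖ = 1)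
    (hquad : ∀ (a : G) (m : ℤ), θ (a ^ m) = θ a ^ (m ^ 2))
    (B : G → G → ℂ) (hB : ∀ a b : G, B a b = θ (a * b) / (θ a * θ b))
    (hbil : ∀ a b c : G, B (a * b) c = B a c * B b c)
    (hnd : ∀ a : G, (∀ b : G, B a b = 1) → a = 1)
    (L : Subgroup G) (hcard : Nat.card L ^ 2 = Nat.card G)
    (htriv : ∀ a : L, θ (a : G) = 1)
    (n : ℕ) (hn : 0 < n) (hcop : Nat.Coprime n (Nat.card G)) :
    Function.Bijective (fun a : G => a ^ n) ∧
    (∀ a ∈ L, a ^ n ∈ L) ∧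
    (∃ r : ℝ, 0 < r ∧ ∑ a : G, θ a ^ n = (Nat.card L : ℂ) * (r : ℂ)) ∧
    (∑ a : G, θ a ^ n) / (‖∑ a : G, θ a ^ n‖ : ℂ) = 1 := by
  classical
  -- basic facts
  have hne : ∀ a : G, θ a ≠ 0 := by
    intro a h
    have := habs a
    rw [h] at this
    simp at this
  have θ1 : θ (1 : G) = 1 := by simpa using hquad 1 0
  have hBsymm : ∀ a b : G, B a b = B b a := by
    intro a b; rw [hB, hB, mul_comm a b, mul_comm (θ a) (θ b)]
  have hθmul : ∀ a b : G, θ (a * b) = θ a * θ b * B a b := by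
    intro a b; rw [hB, mul_comm (θ a * θ b), div_mul_cancel₀ _ (mul_ne_zero (hne a) (hne b))]
  have hbil' : ∀ a b c : G, B a (b * c) = B a b * B a c := by
    intro a b c; rw [hBsymm, hbil, hBsymm b a, hBsymm c a]
  have hB1 : ∀ b : G, B 1 b = 1 := by
    intro b; rw [hB, one_mul, θ1, one_mul, div_self (hne b)]
  have hB1' : ∀ a : G, B a 1 = 1 := fun a => by rw [hBsymm]; exact hB1 a
  have hBpow : ∀ (a b : G) (k : ℕ), B (a ^ k) b = B a b ^ k := by
    intro a b k
    induction k with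
    | zero => simpa using hB1 b
    | succ m ih => rw [pow_succ, hbil, ih, pow_succ]
  have hBpow' : ∀ (a b : G) (k : ℕ), B a (b ^ k) = B a b ^ k := by
    intro a b k; rw [hBsymm, hBpow, hBsymm]
  -- L-triviality of B on L
  have hBL : ∀ a ∈ L, ∀ b ∈ L, B a b = 1 := by
    intro a ha b hb
    rw [hB, htriv ⟨a, ha⟩, htriv ⟨b, hb⟩, htriv ⟨a * b, mul_mem ha hb⟩]
    norm_num
  -- coprimality: n-th power kills nothing
  have hpow_ne : ∀ a : G, a ^ n = 1 → a = 1 := by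
    intro a ha
    have h1 : orderOf a ∣ n := orderOf_dvd_of_pow_eq_one ha
    have h2 : orderOf a ∣ Nat.card G := orderOf_dvd_natCard a
    have : orderOf a ∣ Nat.gcd n (Nat.card G) := Nat.dvd_gcd h1 h2
    rw [hcop] at this
    exact orderOf_eq_one_iff.mp (Nat.eq_one_of_dvd_one this)
  -- bijectivity
  have hbij : Function.Bijective (fun a : G => a ^ n) := (powCoprime hcop.symm).bijective
  refine ⟨hbij, fun a ha => pow_mem ha n, ?_⟩
  -- cardinalities
  have hL0 : (0 : ℕ) < Nat.card L := Nat.card_pos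
  have hLne : (Nat.card L : ℂ) ≠ 0 := by exact_mod_cast hL0.ne'
  set S := ∑ a : G, θ a ^ n with hS
  -- inner sum over L
  set T : G → ℂ := fun a => ∑ l : L, B a (l : G) ^ n with hT
  -- key identity : |L| * S = ∑ a, θ a ^ n * T a
  have key : (Nat.card L : ℂ) * S = ∑ a : G, θ a ^ n * T a := by
    have h1 : ∀ l : L, ∑ a : G, θ (a * (l : G)) ^ n = S := by
      intro l
      exact Fintype.sum_equiv (Equiv.mulRight (l : G)) _ _ (fun a => rfl)
    calc (Nat.card L : ℂ) * S = ∑ _l : L, S := by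
          rw [Finset.sum_const, Nat.card_eq_fintype_card]
          simp [mul_comm, nsmul_eq_mul]
      _ = ∑ l : L, ∑ a : G, θ (a * (l : G)) ^ n := by
          exact Finset.sum_congr rfl (fun l _ => (h1 l).symm)
      _ = ∑ a : G, ∑ l : L, θ (a * (l : G)) ^ n := Finset.sum_comm
      _ = ∑ a : G, θ a ^ n * T a := by
          refine Finset.sum_congr rfl (fun a _ => ?_)
          rw [hT, Finset.mul_sum]
          refine Finset.sum_congr rfl (fun l _ => ?_)
          rw [hθmul, htriv l, mul_one, mul_pow]
  -- the set where T is nonzero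
  set P : Finset G := Finset.univ.filter (fun a => ∀ l : L, B a (l : G) ^ n = 1) with hP
  have hTval : ∀ a : G, T a = if a ∈ P then (Nat.card L : ℂ) else 0 := by
    intro a
    by_cases h : a ∈ P
    · rw [if_pos h, hT]
      simp only [hP, Finset.mem_filter] at h
      rw [Nat.card_eq_fintype_card]
      simp [h.2]
    · rw [if_neg h, hT]
      simp only [hP, Finset.mem_filter, Finset.mem_univ, true_and, not_forall] at h
      obtain ⟨l, hl⟩ := h
      exact aux_char_sum_zero (fun l : L => B a (l : G) ^ n)
        (fun x y => by
          show B a ((↑(x * y) : G)) ^ n = B a (x : G) ^ n * B a (y : G) ^ n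
          rw [Subgroup.coe_mul, hbil', mul_pow]) l hl
  -- total of T is |G|
  have hTsum : ∑ a : G, T a = (Nat.card G : ℂ) := by
    have : ∑ a : G, T a = ∑ l : L, ∑ a : G, B ((l : G) ^ n) a := by
      rw [hT, Finset.sum_comm]
      refine Finset.sum_congr rfl (fun l _ => Finset.sum_congr rfl (fun a _ => ?_))
      rw [hBpow, hBsymm]
    rw [this]
    have hterm : ∀ l : L, (∑ a : G, B ((l : G) ^ n) a)
        = if l = 1 then (Nat.card G : ℂ) else 0 := by
      intro l
      by_cases hl : l = 1
      · rw [if_pos hl, hl, Nat.card_eq_fintype_card]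
        simp [hB1]
      · rw [if_neg hl]
        have hln : ((l : G)) ^ n ≠ 1 := by
          intro h
          exact hl (Subtype.ext (hpow_ne _ h))
        have : ¬ (∀ b : G, B ((l : G) ^ n) b = 1) := fun h => hln (hnd _ h)
        push_neg at this
        obtain ⟨b, hb⟩ := this
        exact aux_char_sum_zero (fun a : G => B ((l : G) ^ n) a)
          (fun x y => hbil' _ x y) b hb
    rw [Finset.sum_congr rfl (fun l _ => hterm l)]
    simp
  -- compute |P|
  have hPcard : P.card = Nat.card L := by
    have h1 : ∑ a : G, T a = (P.card : ℂ) * (Nat.card L : ℂ) := by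
      rw [Finset.sum_congr rfl (fun a _ => hTval a)]
      rw [Finset.sum_ite_mem, Finset.univ_inter, Finset.sum_const]
      simp [mul_comm]
    rw [hTsum] at h1
    have h2 : (Nat.card G : ℂ) = ((Nat.card L : ℂ)) ^ 2 := by
      rw [← hcard]; push_cast; ring
    rw [h2, sq] at h1
    have h3 : (P.card : ℂ) = (Nat.card L : ℂ) :=
      mul_right_cancel₀ hLne h1.symm
    exact_mod_cast h3
  -- L ⊆ P, hence equal
  have hLP : Finset.univ.filter (fun a => a ∈ L) ⊆ P := by
    intro a ha
    simp only [Finset.mem_filter, Finset.mem_univ, true_and] at ha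
    simp only [hP, Finset.mem_filter, Finset.mem_univ, true_and]
    intro l
    rw [hBL a ha l l.2, one_pow]
  have hLcard : (Finset.univ.filter (fun a => a ∈ L)).card = Nat.card L := by
    rw [Nat.card_eq_fintype_card, Fintype.card_subtype]
  have hPL : P = Finset.univ.filter (fun a => a ∈ L) :=
    (Finset.eq_of_subset_of_card_le hLP (by rw [hPcard, hLcard])).symm
  -- now evaluate : |L| * S = |L|^2
  have hfin : (Nat.card L : ℂ) * S = (Nat.card L : ℂ) * (Nat.card L : ℂ) := by
    rw [key, Finset.sum_congr rfl (fun a _ => by rw [hTval a])]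
    have : ∀ a : G, θ a ^ n * (if a ∈ P then (Nat.card L : ℂ) else 0)
        = if a ∈ P then θ a ^ n * (Nat.card L : ℂ) else 0 := by
      intro a; split <;> simp
    rw [Finset.sum_congr rfl (fun a _ => this a), Finset.sum_ite_mem, Finset.univ_inter, hPL]
    have hone : ∀ a ∈ Finset.univ.filter (fun a => a ∈ L),
        θ a ^ n * (Nat.card L : ℂ) = (Nat.card L : ℂ) := by
      intro a ha
      simp only [Finset.mem_filter] at ha
      rw [htriv ⟨a, ha.2⟩, one_pow, one_mul]
    rw [Finset.sum_congr rfl hone, Finset.sum_const, hLcard]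
    simp [mul_comm]
  have hSval : S = (Nat.card L : ℂ) := mul_left_cancel₀ hLne hfin
  constructor
  · exact ⟨1, one_pos, by rw [hSval]; simp⟩
  · rw [hSval]
    rw [Complex.norm_natCast]
    rw [div_eq_one_iff_eq]
    · norm_cast
    · exact_mod_cast hLne
end
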